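/- arXiv:1604.08775 — 2 statements merged into one kernel-verified Lean document; each statement's English description precedes it below -/
import Mathlib

section
/- No gate contains a clique separator; that is, for every gate G and every clique C of G, the graph G − C is connected (gates are atoms). -/
/-- A maximal clique (a maximal complete vertex set) of a simple graph. -/
def IsMaxClique {V : Type} (G : SimpleGraph V) (s : Set V) : Prop :=
  G.IsClique s ∧ ∀ t : Set V, G.IsClique t → s ⊆ t → s = t

/-- The number of maximal cliques of a graph. -/
noncomputable def numMaxCliques {V : Type} (G : SimpleGraph V) : ℕ :=
  {s : Set V | IsMaxClique G s}.ncard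

/-- The graph obtained from `G` and a chordless path on `l` new vertices by joining the
first vertex of the path to every vertex of `A` and the last vertex to every vertex of `B`. -/
def joinPath {V : Type} (G : SimpleGraph V) (A B : Set V) (l : ℕ) :
    SimpleGraph (V ⊕ Fin l) where
  Adj x y :=
    match x, y with
    | Sum.inl a, Sum.inl b => G.Adj a b
    | Sum.inl a, Sum.inr i => (i.val = 0 ∧ a ∈ A) ∨ (i.val = l - 1 ∧ a ∈ B)
    | Sum.inr i, Sum.inl a => (i.val = 0 ∧ a ∈ A) ∨ (i.val = l - 1 ∧ a ∈ B)
    | Sum.inr i, Sum.inr j => i.val + 1 = j.val ∨ j.val + 1 = i.val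
  symm := by
    constructor
    rintro (a | i) (b | j) h <;> simp_all <;> tauto
  loopless := by
    constructor
    rintro (a | i) h
    · exact G.irrefl h
    · rcases h with h | h <;> omega

/-- Gates, defined recursively (up to isomorphism): chordless cycles `Cₙ`, `n ≥ 4`, are
gates, and joining a new chordless path to two disjoint maximal cliques of a gate
yields a gate. -/
inductive IsGate : {V : Type} → SimpleGraph V → Prop
  | cycle (n : ℕ) (hn : 4 ≤ n) : IsGate (SimpleGraph.cycleGraph n)
  | extend {V : Type} (G : SimpleGraph V) (C C' : Set V) (l : ℕ)
      (hG : IsGate G) (hC : IsMaxClique G C) (hC' : IsMaxClique G C')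
      (hdisj : Disjoint C C') (hl : 2 ≤ l) : IsGate (joinPath G C C' l)
  | iso {V W : Type} (G : SimpleGraph V) (H : SimpleGraph W)
      (hG : IsGate G) (e : G ≃g H) : IsGate H

/-- An EPT representation of `G`: a family of paths in a host tree such that two distinct
vertices are adjacent iff their paths share an edge of the tree. -/
structure EPTRep {V : Type} (G : SimpleGraph V) where
  VT : Type
  T : SimpleGraph VT
  tree : T.IsTree
  src : V → VT
  tgt : V → VT
  walk : (v : V) → T.Walk (src v) (tgt v)
  isPath : ∀ v, (walk v).IsPath
  adj_iff : ∀ v w : V, v ≠ w →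
    (G.Adj v w ↔ ∃ e : Sym2 VT, e ∈ (walk v).edges ∧ e ∈ (walk w).edges)

/-- The edge set of the path representing `v`. -/
def EPTRep.edges {V : Type} {G : SimpleGraph V} (R : EPTRep G) (v : V) :
    Set (Sym2 R.VT) := {e | e ∈ (R.walk v).edges}

/-- The representation is Helly: every nonempty pairwise edge-intersecting subfamily of
paths has a common edge. -/
def EPTRep.Helly {V : Type} {G : SimpleGraph V} (R : EPTRep G) : Prop :=
  ∀ S : Set V, S.Nonempty →
    (∀ u ∈ S, ∀ v ∈ S, (R.edges u ∩ R.edges v).Nonempty) →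
    (⋂ v ∈ S, R.edges v).Nonempty

/-- The host tree has maximum degree at most `h`. -/
def EPTRep.maxDegLE {V : Type} {G : SimpleGraph V} (R : EPTRep G) (h : ℕ) : Prop :=
  ∀ x : R.VT, (R.T.neighborSet x).ncard ≤ h

/-- The class `[h,2,2]`. -/
def InEPTClass (h : ℕ) {V : Type} (G : SimpleGraph V) : Prop :=
  ∃ R : EPTRep G, R.maxDegLE h

/-- Helly EPT graphs. -/
def IsHellyEPT {V : Type} (G : SimpleGraph V) : Prop :=
  ∃ R : EPTRep G, R.Helly

/-- The class Helly `[h,2,2]`. -/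
def InHellyClass (h : ℕ) {V : Type} (G : SimpleGraph V) : Prop :=
  ∃ R : EPTRep G, R.Helly ∧ R.maxDegLE h

/-- Three paths of the representation form a claw at some claw of the host tree. -/
def EPTRep.FormsClaw {V : Type} {G : SimpleGraph V} (R : EPTRep G) (a b c : V) : Prop :=
  ∃ q x y z : R.VT, R.T.Adj q x ∧ R.T.Adj q y ∧ R.T.Adj q z ∧
    x ≠ y ∧ y ≠ z ∧ x ≠ z ∧
    s(q, x) ∈ R.edges a ∧ s(q, y) ∈ R.edges a ∧
    s(q, y) ∈ R.edges b ∧ s(q, z) ∈ R.edges b ∧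
    s(q, x) ∈ R.edges c ∧ s(q, z) ∈ R.edges c

/-- A multipie of size `k` whose paths are those representing the vertices in `S`. -/
def IsMultipie {V : Type} {G : SimpleGraph V} (R : EPTRep G) (k : ℕ) (S : Set V) : Prop :=
  ∃ (q : R.VT) (qi : Fin k → R.VT), Function.Injective qi ∧
    (∀ i, R.T.Adj q (qi i)) ∧
    (∀ v ∈ S, {i : Fin k | qi i ∈ (R.walk v).support}.ncard = 2) ∧
    (∀ u ∈ S, ∀ v ∈ S, ∀ i j : Fin k, i ≠ j →
      qi i ∈ (R.walk u).support → qi j ∈ (R.walk u).support →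
      qi i ∈ (R.walk v).support → qi j ∈ (R.walk v).support → u = v) ∧
    (∀ i, 2 ≤ {v ∈ S | s(q, qi i) ∈ R.edges v}.ncard) ∧
    (∀ a ∈ S, ∀ b ∈ S, ∀ c ∈ S, ¬ R.FormsClaw a b c)

/-- The next index around a cycle. -/
def finNext {k : ℕ} (hk : 0 < k) (i : Fin k) : Fin k :=
  ⟨(i.val + 1) % k, Nat.mod_lt _ hk⟩

/-- `G` has a clique separator: a complete vertex set whose removal disconnects the graph. -/
def HasCliqueSep {V : Type} (G : SimpleGraph V) : Prop :=
  ∃ C : Set V, G.IsClique C ∧ ¬ (G.induce Cᶜ).Preconnected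

/-- An atom of `G`: a maximal vertex subset inducing a connected subgraph without clique
separators. -/
def IsAtomOf {V : Type} (G : SimpleGraph V) (A : Set V) : Prop :=
  (G.induce A).Connected ∧ ¬ HasCliqueSep (G.induce A) ∧
    ∀ B : Set V, A ⊆ B → (G.induce B).Connected → ¬ HasCliqueSep (G.induce B) → A = B
/-
Induction along the recursive definition of gates; an isomorphism carries cliques to cliques.
In a cycle of length at least four a clique is at most an edge, and what remains is a path.
When a chordless path `P` is joined to disjoint maximal cliques `A`, `B` of a gate `G`, a clique
`D` of the new graph meets `P` in at most two consecutive vertices, and its trace on `G` is a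
clique, so `G - D` is connected by induction. A surviving vertex of `P` can walk along `P`, away
from `D`, to an end of `P` whose attaching clique is not swallowed by `D`: if `D` meets `P`, its
trace on `G` lies in the clique attached at the end it touches, and `A ∩ B = ∅`; if `D` misses
`P`, then `A ∪ B ⊆ D` would force `A = D ∩ G ⊇ B` by maximality of `A`.
-/

namespace SimpleGraph

variable {U V W : Type*} {G : SimpleGraph V} {H : SimpleGraph W}

theorem Connected.of_forall_reachable_range {K : SimpleGraph U} (hK : K.Connected)
    (φ : K →g H) (h : ∀ w, ∃ u, H.Reachable w (φ u)) : H.Connected := by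
  obtain ⟨u₀⟩ := hK.nonempty
  refine H.connected_iff_exists_forall_reachable.2 ⟨φ u₀, fun w => ?_⟩
  obtain ⟨u, hu⟩ := h w
  exact ((hK u₀ u).map φ).trans hu.symm

def Hom.codRestrictInduce {K : SimpleGraph U} (φ : K →g H) {s : Set W} (hs : ∀ u, φ u ∈ s) :
    K →g H.induce s :=
  ⟨fun u => ⟨φ u, hs u⟩, φ.map_adj⟩

theorem IsClique.preimage (f : G ↪g H) {C : Set W} (hC : H.IsClique C) :
    G.IsClique (f ⁻¹' C) :=
  fun _ hx _ hy hxy => f.map_adj_iff.mp (hC hx hy (f.injective.ne hxy))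

theorem Iso.connected_induce_compl_of_preimage (e : G ≃g H) {C : Set W}
    (h : (G.induce (e ⁻¹' C)ᶜ).Connected) : (H.induce Cᶜ).Connected :=
  (e.induce (e.toEquiv.bijOn fun _ => Iff.rfl)).connected_iff.mp h

end SimpleGraph

open SimpleGraph

theorem IsMaxClique.nonempty {V : Type} [Nonempty V] {G : SimpleGraph V} {s : Set V}
    (hs : IsMaxClique G s) : s.Nonempty := by
  obtain ⟨v⟩ := ‹Nonempty V›
  rw [Set.nonempty_iff_ne_empty]
  rintro rfl
  exact Set.singleton_ne_empty v (hs.2 {v} (isClique_singleton v) (Set.empty_subset _)).symm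

section CycleGraph

variable {m : ℕ}

def cycleGraphRotation (n : ℕ) (c : Fin (n + 2)) :
    cycleGraph (n + 2) ≃g cycleGraph (n + 2) where
  toEquiv := Equiv.addRight c
  map_rel_iff' := by simp [cycleGraph_adj]

theorem cycleGraph_isClique_subset_pair {C : Set (Fin (m + 4))}
    (hC : (cycleGraph (m + 4)).IsClique C) : ∃ a, C ⊆ {a, a + 1} := by
  rcases C.eq_empty_or_nonempty with rfl | ⟨x, hx⟩
  · exact ⟨0, Set.empty_subset _⟩
  have near : ∀ z ∈ C, z = x - 1 ∨ z = x ∨ z = x + 1 := by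
    intro z hz
    by_cases hzx : z = x
    · exact Or.inr (Or.inl hzx)
    rcases cycleGraph_adj.mp (hC hz hx hzx) with h | h
    · right; right; rw [← h]; abel
    · left; rw [← h]; abel
  have one_add_one_ne_zero : (1 : Fin (m + 4)) + 1 ≠ 0 := by
    simp [Fin.ext_iff, Fin.val_add, Nat.mod_eq_of_lt]
  -- `x - 1` and `x + 1` are at distance two, which on a cycle of length `≥ 4` is not one.
  have not_both : x - 1 ∈ C → x + 1 ∉ C := by
    intro h₁ h₂
    have hdiff : x + 1 - (x - 1) = 1 + 1 := by abel
    have hne : x + 1 ≠ x - 1 := fun h => one_add_one_ne_zero (by rw [← hdiff, h, sub_self])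
    rcases cycleGraph_adj.mp (hC h₂ h₁ hne) with h | h
    · simp [hdiff] at h
    · rw [← neg_sub, hdiff, neg_eq_iff_add_eq_zero] at h
      simp [Fin.ext_iff, Fin.val_add, Nat.mod_eq_of_lt] at h
  by_cases hx' : x - 1 ∈ C
  · refine ⟨x - 1, fun z hz => ?_⟩
    rcases near z hz with rfl | rfl | rfl
    · simp
    · simp
    · exact absurd hz (not_both hx')
  · refine ⟨x, fun z hz => ?_⟩
    rcases near z hz with rfl | rfl | rfl
    · exact absurd hz hx'
    · simp
    · simp

theorem cycleGraph_connected_induce_compl_of_le_val {C : Set (Fin (m + 4))}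
    (hC : ∀ v ∈ C, m + 2 ≤ v.val) : ((cycleGraph (m + 4)).induce Cᶜ).Connected := by
  let φ : pathGraph (m + 2) →g cycleGraph (m + 4) :=
    ⟨Fin.castLE (by omega), fun h => pathGraph_le_cycleGraph (by simpa [pathGraph_adj] using h)⟩
  have hφ : ∀ k, φ k ∈ Cᶜ := fun k hk => by have := hC _ hk; simp [φ] at this; omega
  refine (pathGraph_connected (m + 1)).of_forall_reachable_range (φ.codRestrictInduce hφ) ?_
  rintro ⟨v, hv⟩
  rcases (by omega : v.val < m + 2 ∨ v.val = m + 2 ∨ v.val = m + 3) with h | h | h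
  · exact ⟨⟨v, h⟩, .refl _⟩
  · refine ⟨⟨m + 1, by omega⟩, Adj.reachable (induce_adj.2 ?_)⟩
    refine pathGraph_le_cycleGraph (pathGraph_adj.2 ?_)
    simp [Hom.codRestrictInduce, φ, h]
  · refine ⟨0, Adj.reachable ?_⟩
    obtain rfl : v = Fin.last _ := Fin.ext h
    show (cycleGraph (m + 4)).Adj (Fin.last _) 0
    simp [cycleGraph_adj]

theorem cycleGraph_connected_induce_compl {C : Set (Fin (m + 4))}
    (hC : (cycleGraph (m + 4)).IsClique C) : ((cycleGraph (m + 4)).induce Cᶜ).Connected := by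
  obtain ⟨a, ha⟩ := cycleGraph_isClique_subset_pair hC
  -- rotate so that the clique lies among the last two vertices
  let p : Fin (m + 4) := ⟨m + 2, by omega⟩
  let e := cycleGraphRotation (m + 2) (a - p)
  refine e.connected_induce_compl_of_preimage (cycleGraph_connected_induce_compl_of_le_val ?_)
  intro v hv
  have hv' : v = p ∨ v = p + 1 := by
    rcases ha hv with h | h
    · left
      calc v = v + (a - p) - (a - p) := by abel
        _ = p := by rw [show v + (a - p) = a from h]; abel
    · right
      calc v = v + (a - p) - (a - p) := by abel
        _ = p + 1 := by rw [show v + (a - p) = a + 1 from h]; abel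
  rcases hv' with rfl | rfl
  · simp [p]
  · simp [p, Fin.val_add, Nat.mod_eq_of_lt]

end CycleGraph

section JoinPath

variable {V : Type} {G : SimpleGraph V} {A B : Set V} {l : ℕ} {D : Set (V ⊕ Fin l)}

def joinPathInl : G ↪g joinPath G A B l :=
  ⟨Function.Embedding.inl, Iff.rfl⟩

def joinPathSegment (i n : ℕ) (h : i + n ≤ l) : pathGraph n →g joinPath G A B l :=
  ⟨fun k => Sum.inr ⟨i + k, by omega⟩, fun {a b} hk => by
    rw [pathGraph_adj] at hk
    show i + a + 1 = i + b ∨ i + b + 1 = i + a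
    omega⟩

theorem joinPath_reachable_inr {S : Set (V ⊕ Fin l)} {i j : Fin l} (hij : i ≤ j)
    (hS : ∀ k, i ≤ k → k ≤ j → Sum.inr k ∈ S) :
    ((joinPath G A B l).induce S).Reachable
      ⟨Sum.inr i, hS i le_rfl hij⟩ ⟨Sum.inr j, hS j hij le_rfl⟩ := by
  let φ : pathGraph (j - i + 1) →g joinPath G A B l := joinPathSegment i (j - i + 1) (by omega)
  have hφ : ∀ k, φ k ∈ S := fun k =>
    hS _ (Fin.le_def.2 (Nat.le_add_right _ _)) (Fin.le_def.2 (by simp only; omega))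
  convert (pathGraph_preconnected _ 0 ⟨j - i, by omega⟩).map (φ.codRestrictInduce hφ) using 3
  · simp [φ, joinPathSegment, Hom.codRestrictInduce]
  · simp [φ, joinPathSegment, Hom.codRestrictInduce, Fin.ext_iff]; omega

theorem joinPath_exists_escape [Nonempty V] (hA : IsMaxClique G A) (hB : IsMaxClique G B)
    (hAB : Disjoint A B) (hD : (joinPath G A B l).IsClique D) {j : Fin l} (hj : Sum.inr j ∉ D) :
    ((∃ a ∈ A, Sum.inl a ∉ D) ∧ ∀ k ≤ j, Sum.inr k ∉ D) ∨
      ((∃ b ∈ B, Sum.inl b ∉ D) ∧ ∀ k, j ≤ k → Sum.inr k ∉ D) := by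
  by_cases hP : ∃ i, Sum.inr i ∈ D
  · obtain ⟨i, hi⟩ := hP
    have hji : j ≠ i := by rintro rfl; exact hj hi
    rcases hji.lt_or_gt with hji | hij
    · obtain ⟨a, ha⟩ := hA.nonempty
      refine Or.inl ⟨⟨a, ha, fun haD => ?_⟩, fun k hk hkD => ?_⟩
      · rcases hD haD hi Sum.inl_ne_inr with ⟨h0, -⟩ | ⟨-, haB⟩
        · omega
        · exact hAB.notMem_of_mem_left ha haB
      · have hki : k ≠ i := by rintro rfl; exact (hk.trans_lt hji).false
        rcases hD hkD hi (Sum.inr_injective.ne hki) with h | h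
        · obtain rfl : k = j := Fin.ext (by omega)
          exact hj hkD
        · omega
    · obtain ⟨b, hb⟩ := hB.nonempty
      refine Or.inr ⟨⟨b, hb, fun hbD => ?_⟩, fun k hk hkD => ?_⟩
      · rcases hD hbD hi Sum.inl_ne_inr with ⟨-, hbA⟩ | ⟨hl, -⟩
        · exact hAB.notMem_of_mem_left hbA hb
        · omega
      · have hki : k ≠ i := by rintro rfl; exact (hij.trans_le hk).false
        rcases hD hkD hi (Sum.inr_injective.ne hki) with h | h
        · omega
        · obtain rfl : k = j := Fin.ext (by omega)
          exact hj hkD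
  · push Not at hP
    by_cases hAD : ∃ a ∈ A, Sum.inl a ∉ D
    · exact Or.inl ⟨hAD, fun k _ => hP k⟩
    refine Or.inr ⟨?_, fun k _ => hP k⟩
    by_contra hBD
    push Not at hAD hBD
    have hAeq : A = Sum.inl ⁻¹' D := hA.2 _ (hD.preimage joinPathInl) hAD
    obtain ⟨b, hb⟩ := hB.nonempty
    exact hAB.notMem_of_mem_right hb (hAeq ▸ hBD b hb)

theorem joinPath_connected_induce_compl (hA : IsMaxClique G A) (hB : IsMaxClique G B)
    (hAB : Disjoint A B) (hG : ∀ E, G.IsClique E → (G.induce Eᶜ).Connected)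
    (hD : (joinPath G A B l).IsClique D) : ((joinPath G A B l).induce Dᶜ).Connected := by
  have hGD := hG _ (hD.preimage joinPathInl)
  have : Nonempty V := ⟨hGD.nonempty.some.1⟩
  refine hGD.of_forall_reachable_range (induceHom joinPathInl.toHom fun _ h => h) ?_
  rintro ⟨v | j, hj⟩
  · exact ⟨⟨v, hj⟩, .refl _⟩
  rcases joinPath_exists_escape hA hB hAB hD hj with
    ⟨⟨a, ha, haD⟩, hpre⟩ | ⟨⟨b, hb, hbD⟩, hsuf⟩
  · have h0 : (⟨0, j.pos⟩ : Fin l) ≤ j := Fin.le_def.2 (Nat.zero_le _)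
    exact ⟨⟨a, haD⟩, (joinPath_reachable_inr h0 fun k _ hk => hpre k hk).symm.trans
      (Adj.reachable (Or.inl ⟨rfl, ha⟩))⟩
  · have hlast : j ≤ ⟨l - 1, Nat.sub_one_lt_of_lt j.isLt⟩ :=
      Fin.le_def.2 (Nat.le_sub_one_of_lt j.isLt)
    exact ⟨⟨b, hbD⟩, (joinPath_reachable_inr hlast fun k hk _ => hsuf k hk).trans
      (Adj.reachable (Or.inr ⟨rfl, hb⟩))⟩

end JoinPath

theorem stmt6 {V : Type} (G : SimpleGraph V) (hG : IsGate G)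
    (C : Set V) (hC : G.IsClique C) : (G.induce Cᶜ).Connected := by
  induction hG with
  | cycle n hn =>
    obtain ⟨m, rfl⟩ : ∃ m, n = m + 4 := ⟨n - 4, by omega⟩
    exact cycleGraph_connected_induce_compl hC
  | extend G A B l _ hA hB hAB _ ih =>
    exact joinPath_connected_induce_compl hA hB hAB ih hC
  | iso G H _ e ih =>
    exact e.connected_induce_compl_of_preimage (ih _ (hC.preimage e.toEmbedding))
end

section
/- Every pie of size k in an EPT representation is a multipie of size k. -/
namespace SimpleGraph

variable {VT : Type*} {T : SimpleGraph VT}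

lemma IsAcyclic.mem_edges_of_adj_of_mem_support (hT : T.IsAcyclic) {a b u v : VT}
    (p : T.Walk a b) (hu : u ∈ p.support) (hv : v ∈ p.support) (huv : T.Adj u v) :
    s(u, v) ∈ p.edges := by
  classical
  have hbridge := isAcyclic_iff_forall_isBridge.mp hT (T.mem_edgeSet.mpr huv)
  have := isBridge_iff_forall_walk_mem_edges.mp hbridge
    ((p.takeUntil u hu).reverse.append (p.takeUntil v hv))
  rw [Walk.edges_append, Walk.edges_reverse, List.mem_append, List.mem_reverse] at this
  rcases this with h | h
  · exact p.edges_takeUntil_subset_edges hu h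
  · exact p.edges_takeUntil_subset_edges hv h

lemma Walk.IsPath.ncard_neighborSet_toSubgraph_le_two {a b : VT} {p : T.Walk a b}
    (hp : p.IsPath) (w : VT) : (p.toSubgraph.neighborSet w).ncard ≤ 2 := by
  by_cases hnil : p.Nil
  · obtain rfl := hnil.eq
    simp [Walk.eq_nil_iff_nil.mpr hnil]
  by_cases hw : w ∈ p.support
  · obtain ⟨i, rfl, hi⟩ := mem_support_iff_exists_getVert.mp hw
    rcases Nat.eq_zero_or_pos i with rfl | hi0
    · simp [hp.neighborSet_toSubgraph_startpoint hnil]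
    rcases hi.lt_or_eq with hlt | rfl
    · rw [hp.neighborSet_toSubgraph_internal hi0.ne' hlt]
      exact (Set.ncard_insert_le _ _).trans (by simp)
    · simp [hp.neighborSet_toSubgraph_endpoint hnil]
  · have : p.toSubgraph.neighborSet w = ∅ := by
      ext x
      simp only [Subgraph.mem_neighborSet, Set.mem_empty_iff_false, iff_false]
      exact fun h => hw (p.mem_verts_toSubgraph.mp h.fst_mem)
    simp [this]

lemma Walk.IsPath.eq_or_eq_or_eq_of_mem_edges {a b q x y z : VT} {p : T.Walk a b}
    (hp : p.IsPath) (hx : s(q, x) ∈ p.edges) (hy : s(q, y) ∈ p.edges)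
    (hz : s(q, z) ∈ p.edges) : x = y ∨ x = z ∨ y = z := by
  by_contra! h
  have hlt : 2 < (p.toSubgraph.neighborSet q).ncard :=
    (Set.two_lt_ncard_iff p.finite_neighborSet_toSubgraph).mpr
      ⟨x, y, z, Walk.adj_toSubgraph_iff_mem_edges.mpr hx, Walk.adj_toSubgraph_iff_mem_edges.mpr hy,
        Walk.adj_toSubgraph_iff_mem_edges.mpr hz, h⟩
  exact hlt.not_ge (hp.ncard_neighborSet_toSubgraph_le_two q)

lemma cycleGraph_cliqueFree_three {k : ℕ} (hk : 4 ≤ k) : (cycleGraph k).CliqueFree 3 := by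
  obtain ⟨n, rfl⟩ : ∃ n, k = n + 4 := ⟨k - 4, by omega⟩
  intro s hs
  obtain ⟨a, b, c, -, -, -, rfl⟩ := Finset.card_eq_three.mp hs.card_eq
  rw [is3Clique_triple_iff] at hs
  simp only [cycleGraph_adj] at hs
  -- the three differences `±1` would have to sum to `0`
  have h3 : (3 : Fin (n + 4)) ≠ 0 := by
    simp [Fin.ext_iff, Nat.mod_eq_of_lt (show 3 < n + 4 by omega)]
  grind

lemma IsAcyclic.setOf_mem_support_eq_pair {ι : Type*} (hT : T.IsAcyclic) {q : VT}
    {qi : ι → VT} (hinj : Function.Injective qi) (hadj : ∀ i, T.Adj q (qi i))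
    {a b : VT} {p : T.Walk a b} (hp : p.IsPath) (hq : q ∈ p.support) {j j' : ι}
    (hj : qi j ∈ p.support) (hj' : qi j' ∈ p.support) (hjj' : j ≠ j') :
    {i | qi i ∈ p.support} = {j, j'} := by
  ext i
  refine ⟨fun hi => ?_, by rintro (rfl | rfl) <;> assumption⟩
  have edge l (hl : qi l ∈ p.support) : s(q, qi l) ∈ p.edges :=
    hT.mem_edges_of_adj_of_mem_support p hq hl (hadj l)
  rcases hp.eq_or_eq_or_eq_of_mem_edges (edge i hi) (edge j hj) (edge j' hj') with h | h | h
  · exact .inl (hinj h)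
  · exact .inr (hinj h)
  · exact absurd (hinj h) hjj'

end SimpleGraph

lemma Fin.eq_of_mem_pair_add_one {k : ℕ} [NeZero k] (hk : 3 ≤ k) {a b i j : Fin k}
    (hij : i ≠ j) (hia : i ∈ ({a, a + 1} : Set (Fin k))) (hja : j ∈ ({a, a + 1} : Set (Fin k)))
    (hib : i ∈ ({b, b + 1} : Set (Fin k))) (hjb : j ∈ ({b, b + 1} : Set (Fin k))) : a = b := by
  obtain ⟨n, rfl⟩ : ∃ n, k = n + 3 := ⟨k - 3, by omega⟩
  have h2 : (2 : Fin (n + 3)) ≠ 0 := by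
    simp [Fin.ext_iff, Nat.mod_eq_of_lt (show 2 < n + 3 by omega)]
  simp only [Set.mem_insert_iff, Set.mem_singleton_iff] at hia hja hib hjb
  grind

lemma finNext_eq_add_one {k : ℕ} [NeZero k] (hk : 0 < k) (i : Fin k) :
    finNext hk i = i + 1 := by
  ext
  simp [finNext, Fin.val_add]

lemma EPTRep.FormsClaw.adj {V : Type} {G : SimpleGraph V} {R : EPTRep G} {a b c : V}
    (h : R.FormsClaw a b c) : G.Adj a b ∧ G.Adj a c ∧ G.Adj b c := by
  obtain ⟨q, x, y, z, -, -, -, hxy, hyz, hxz, hax, hay, hby, hbz, hcx, hcz⟩ := h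
  have three_spokes {v : V} (hx : s(q, x) ∈ R.edges v) (hy : s(q, y) ∈ R.edges v)
      (hz : s(q, z) ∈ R.edges v) : False := by
    rcases (R.isPath v).eq_or_eq_or_eq_of_mem_edges hx hy hz with h | h | h <;> contradiction
  have hab : a ≠ b := by rintro rfl; exact three_spokes hax hay hbz
  have hac : a ≠ c := by rintro rfl; exact three_spokes hax hay hcz
  have hbc : b ≠ c := by rintro rfl; exact three_spokes hcx hby hbz
  exact ⟨(R.adj_iff a b hab).mpr ⟨_, hay, hby⟩, (R.adj_iff a c hac).mpr ⟨_, hax, hcx⟩,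
    (R.adj_iff b c hbc).mpr ⟨_, hbz, hcz⟩⟩

theorem stmt19 {V : Type} (G : SimpleGraph V) (R : EPTRep G) (k : ℕ) (hk : 4 ≤ k)
    (f : SimpleGraph.cycleGraph k ↪g G) (q : R.VT) (qi : Fin k → R.VT)
    (hinj : Function.Injective qi) (hadj : ∀ i, R.T.Adj q (qi i))
    (hpie : ∀ i : Fin k, qi i ∈ (R.walk (f i)).support ∧ q ∈ (R.walk (f i)).support ∧
      qi (finNext (by omega) i) ∈ (R.walk (f i)).support) :
    IsMultipie R k (Set.range ⇑f) := by
  have : NeZero k := ⟨by omega⟩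
  have hsucc (j : Fin k) : j ≠ j + 1 := by simp; omega
  simp only [finNext_eq_add_one] at hpie
  have spokes (j : Fin k) : {i | qi i ∈ (R.walk (f j)).support} = {j, j + 1} :=
    R.tree.isAcyclic.setOf_mem_support_eq_pair hinj hadj (R.isPath _) (hpie j).2.1 (hpie j).1
      (hpie j).2.2 (hsucc j)
  have spoke_mem_edges (i j : Fin k) (h : qi i ∈ (R.walk (f j)).support) :
      s(q, qi i) ∈ R.edges (f j) :=
    R.tree.isAcyclic.mem_edges_of_adj_of_mem_support _ (hpie j).2.1 h (hadj i)
  refine ⟨q, qi, hinj, hadj, ?_, ?_, ?_, ?_⟩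
  · rintro _ ⟨j, rfl⟩
    rw [spokes j, Set.ncard_pair (hsucc j)]
  · rintro _ ⟨a, rfl⟩ _ ⟨b, rfl⟩ i j hij hia hja hib hjb
    rw [← Set.mem_ofPred (p := fun i => qi i ∈ _), spokes] at hia hja hib hjb
    rw [Fin.eq_of_mem_pair_add_one (by omega) hij hia hja hib hjb]
  · intro i
    refine (Set.one_lt_ncard_iff ((Set.finite_range f).subset (Set.sep_subset _ _))).mpr
      ⟨f i, f (i - 1), ⟨⟨i, rfl⟩, spoke_mem_edges i i (hpie i).1⟩, ⟨⟨i - 1, rfl⟩, ?_⟩, ?_⟩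
    · exact spoke_mem_edges i (i - 1) (by simpa using (hpie (i - 1)).2.2)
    · simpa using (hsucc (i - 1)).symm
  · rintro _ ⟨a, rfl⟩ _ ⟨b, rfl⟩ _ ⟨c, rfl⟩ hclaw
    refine SimpleGraph.cycleGraph_cliqueFree_three hk {a, b, c} ?_
    simpa [SimpleGraph.is3Clique_triple_iff] using hclaw.adj
end
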